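/- arXiv:1401.0914 — 2 statements merged into one kernel-verified Lean document; each statement's English description precedes it below -/
import Mathlib

section
/- Let λ > 0, let G be a Borel probability measure on (0,∞), let H̄ : (0,∞) → [0,1] be measurable, and let m > 1 satisfy m·∫ e^{−λx} H̄(x) dG(x) = 1 and μ∞ := m·∫ H̄(x) dG(x) > 1. Define F_R(s) := 1 − (m/(μ∞ − 1))·∫_{(s,∞)} (1 − e^{λ(s−x)}) H̄(x) dG(x) for s ≥ 0. Then F_R(0) = 0, F_R is nondecreasing, 0 ≤ F_R(s) ≤ 1 for all s ≥ 0, and F_R(s) → 1 as s → ∞; i.e., F_R is the cumulative distribution function of a probability measure on [0,∞). -/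
/-!
Write `I(s) = ∫_{(s,∞)} (1 - e^{l(s-x)}) H̄(x) dG(x)`, so that `F_R = 1 - c·I` with
`c = m/(μ∞ - 1) > 0`. Since `G` lives on `(0,∞)`, `I(0) = ∫ H̄ dG - ∫ e^{-lx} H̄ dG`, which the
two defining equations turn into `(μ∞ - 1)/m`; hence `F_R(0) = 0`. For `x > s` the integrand lies
in `[0, H̄(x)]` and decreases in `s`, while the domain `(s,∞)` shrinks, so `I` is nonnegative,
antitone, and dominated by `∫_{(s,∞)} H̄ dG → 0`.
-/

open MeasureTheory Filter Topology Set

noncomputable def residualKernel (l : ℝ) (h : ℝ → ℝ) (s x : ℝ) : ℝ :=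
  (1 - Real.exp (l * (s - x))) * h x

noncomputable def residualIntegral (G : Measure ℝ) (l : ℝ) (h : ℝ → ℝ) (s : ℝ) : ℝ :=
  ∫ x in Ioi s, residualKernel l h s x ∂G

section ResidualKernel

variable {l : ℝ} {h : ℝ → ℝ} {s t x : ℝ}

theorem residualKernel_nonneg (hl : 0 ≤ l) (hh : 0 ≤ h x) (hsx : s ≤ x) :
    0 ≤ residualKernel l h s x :=
  mul_nonneg (sub_nonneg.2 <| Real.exp_le_one_iff.2 <|
    mul_nonpos_of_nonneg_of_nonpos hl (sub_nonpos.2 hsx)) hh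

theorem residualKernel_le (hh : 0 ≤ h x) : residualKernel l h s x ≤ h x :=
  mul_le_of_le_one_left hh (sub_le_self _ (Real.exp_pos _).le)

theorem residualKernel_antitone_left (hl : 0 ≤ l) (hh : 0 ≤ h x) (hst : s ≤ t) :
    residualKernel l h t x ≤ residualKernel l h s x :=
  mul_le_mul_of_nonneg_right (sub_le_sub_left (Real.exp_le_exp.2 <|
    mul_le_mul_of_nonneg_left (sub_le_sub_right hst x) hl) 1) hh

end ResidualKernel

section ResidualIntegral

variable {G : Measure ℝ} {l : ℝ} {h : ℝ → ℝ}

theorem integrableOn_residualKernel (hl : 0 ≤ l) (h0 : ∀ x, 0 ≤ h x) (hint : Integrable h G)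
    (s : ℝ) : IntegrableOn (residualKernel l h s) (Ioi s) G := by
  refine hint.integrableOn.mono' ?_ ?_
  · exact ((by fun_prop : Continuous fun x => 1 - Real.exp (l * (s - x))).aestronglyMeasurable.mul
      hint.aestronglyMeasurable).restrict
  · filter_upwards [self_mem_ae_restrict measurableSet_Ioi] with x hx
    rw [Real.norm_of_nonneg (residualKernel_nonneg hl (h0 x) (le_of_lt hx))]
    exact residualKernel_le (h0 x)

theorem residualIntegral_nonneg (hl : 0 ≤ l) (h0 : ∀ x, 0 ≤ h x) (s : ℝ) :
    0 ≤ residualIntegral G l h s :=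
  setIntegral_nonneg measurableSet_Ioi fun x hx => residualKernel_nonneg hl (h0 x) (le_of_lt hx)

theorem residualIntegral_antitone (hl : 0 ≤ l) (h0 : ∀ x, 0 ≤ h x) (hint : Integrable h G) :
    Antitone (residualIntegral G l h) := by
  intro s t hst
  calc residualIntegral G l h t
      ≤ ∫ x in Ioi t, residualKernel l h s x ∂G :=
        setIntegral_mono_on (integrableOn_residualKernel hl h0 hint t)
          ((integrableOn_residualKernel hl h0 hint s).mono_set (Ioi_subset_Ioi hst))
          measurableSet_Ioi fun x _ => residualKernel_antitone_left hl (h0 x) hst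
    _ ≤ residualIntegral G l h s :=
        setIntegral_mono_set (integrableOn_residualKernel hl h0 hint s)
          ((ae_restrict_iff' measurableSet_Ioi).2 <| .of_forall fun x hx =>
            residualKernel_nonneg hl (h0 x) (le_of_lt hx))
          (Ioi_subset_Ioi hst).eventuallyLE

theorem tendsto_setIntegral_Ioi_atTop (hint : Integrable h G) :
    Tendsto (fun s => ∫ x in Ioi s, h x ∂G) atTop (𝓝 0) := by
  have hempty : ⋂ s : ℝ, Ioi s = ∅ := iInter_eq_empty_iff.2 fun x => ⟨x, lt_irrefl x⟩
  simpa [hempty] using tendsto_setIntegral_of_antitone (fun s => measurableSet_Ioi)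
    (fun s t hst => Ioi_subset_Ioi hst) ⟨0, hint.integrableOn⟩

theorem tendsto_residualIntegral_atTop (hl : 0 ≤ l) (h0 : ∀ x, 0 ≤ h x)
    (hint : Integrable h G) : Tendsto (residualIntegral G l h) atTop (𝓝 0) :=
  squeeze_zero (residualIntegral_nonneg hl h0)
    (fun s => setIntegral_mono_on (integrableOn_residualKernel hl h0 hint s) hint.integrableOn
      measurableSet_Ioi fun x _ => residualKernel_le (h0 x))
    (tendsto_setIntegral_Ioi_atTop hint)

theorem residualIntegral_zero (hG : G (Iic 0) = 0) (hl : 0 ≤ l) (h0 : ∀ x, 0 ≤ h x)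
    (hint : Integrable h G) :
    residualIntegral G l h 0 = ∫ x, h x ∂G - ∫ x, Real.exp (-l * x) * h x ∂G := by
  have hG' : G.restrict (Ioi 0) = G :=
    Measure.restrict_eq_self_of_ae_mem ((mem_ae_iff (s := Ioi 0)).2 (by rwa [compl_Ioi]))
  have hk := integrableOn_residualKernel hl h0 hint 0
  rw [IntegrableOn, hG'] at hk
  have hkernel : residualKernel l h 0 = fun x => h x - Real.exp (-l * x) * h x := by
    ext x
    simp only [residualKernel]
    ring_nf
  rw [residualIntegral, hG', ← integral_sub hint, hkernel]
  refine (hint.sub hk).congr (.of_forall fun x => ?_)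
  simp only [Pi.sub_apply, hkernel]
  ring

/-- **The residual time-to-birth distribution is a CDF.** Let `l > 0`, `G` a Borel
probability measure on `(0,∞)`, `H̄ : ℝ → [0,1]` measurable, `m > 1` with
`m·∫ e^{−lx} H̄(x) dG(x) = 1` and `μ∞ := m·∫ H̄(x) dG(x) > 1`.  Define
`F_R(s) := 1 − (m/(μ∞ − 1))·∫_{(s,∞)} (1 − e^{l(s−x)}) H̄(x) dG(x)` for `s ≥ 0`.
Then `F_R(0) = 0`, `F_R` is nondecreasing on `[0,∞)`, `0 ≤ F_R ≤ 1` there, and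
`F_R(s) → 1` as `s → ∞`. -/
theorem residual_time_to_birth_is_cdf
    (l : ℝ) (hl : 0 < l)
    (G : Measure ℝ) [IsProbabilityMeasure G] (hGsupp : G (Set.Iic 0) = 0)
    (Hbar : ℝ → ℝ) (hHm : Measurable Hbar) (hH01 : ∀ x, Hbar x ∈ Set.Icc (0:ℝ) 1)
    (m : ℝ) (hm : 1 < m)
    (hmal : m * ∫ x, Real.exp (-l * x) * Hbar x ∂G = 1)
    (μinf : ℝ) (hμdef : μinf = m * ∫ x, Hbar x ∂G) (hμ : 1 < μinf)
    (F : ℝ → ℝ)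
    (hF : ∀ s : ℝ, F s =
      1 - (m / (μinf - 1)) *
        ∫ x in Set.Ioi s, (1 - Real.exp (l * (s - x))) * Hbar x ∂G) :
    F 0 = 0 ∧ MonotoneOn F (Set.Ici 0) ∧
    (∀ s : ℝ, 0 ≤ s → F s ∈ Set.Icc (0:ℝ) 1) ∧
    Tendsto F atTop (𝓝 1) := by
  have hFI : ∀ s, F s = 1 - m / (μinf - 1) * residualIntegral G l Hbar s := hF
  have h0 : ∀ x, 0 ≤ Hbar x := fun x => (hH01 x).1
  have hint : Integrable Hbar G :=
    .of_bound hHm.aestronglyMeasurable 1 <| .of_forall fun x => by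
      rw [Real.norm_of_nonneg (h0 x)]
      exact (hH01 x).2
  have hc : 0 < m / (μinf - 1) := div_pos (by linarith) (by linarith)
  have hI0 : residualIntegral G l Hbar 0 = (μinf - 1) / m := by
    rw [residualIntegral_zero hGsupp hl.le h0 hint, eq_div_iff (by linarith), sub_mul, hμdef]
    linarith
  have hF0 : F 0 = 0 := by
    rw [hFI, hI0, div_mul_div_comm, mul_comm m,
      div_self (mul_pos (sub_pos.2 hμ) (by linarith)).ne', sub_self]
  have hmono : Monotone F := fun s t hst => by
    rw [hFI s, hFI t]
    gcongr
    exact residualIntegral_antitone hl.le h0 hint hst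
  have hlim := ((tendsto_residualIntegral_atTop hl.le h0 hint).const_mul
    (m / (μinf - 1))).const_sub 1
  rw [mul_zero, sub_zero] at hlim
  refine ⟨hF0, hmono.monotoneOn _, fun s hs => ⟨hF0 ▸ hmono hs, ?_⟩,
    hlim.congr fun s => (hFI s).symm⟩
  rw [hFI]
  exact sub_le_self _ (mul_nonneg hc.le (residualIntegral_nonneg hl.le h0 s))
end ResidualIntegral
end

section
/- Let λ > 0 and let G be a Borel probability measure on (0,∞), and let m > 1 satisfy m·∫ e^{−λx} dG(x) = 1. Define F_R(s) := 1 − (m/(m − 1))·∫_{(s,∞)} (1 − e^{λ(s−x)}) dG(x) for s ≥ 0, and let m* := m·∫ x e^{−λx} dG(x) (which is finite). Then B := ∫₀^∞ F_R(z) e^{−λz} dz = m*/(m − 1). -/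
/-!
Writing `F z e^{-lz} = e^{-lz} - (m/(m-1)) ∫_{x>z} (e^{-lz} - e^{-lx}) dG(x)` and exchanging
the order of integration (Tonelli–Fubini with the integrable majorant `e^{-lz}`), the inner
integral is `∫₀ˣ (e^{-lz} - e^{-lx}) dz = (1 - e^{-lx})/l - x e^{-lx}`. Integrating against `G`
and using `∫ e^{-lx} dG = 1/m` gives `B = 1/l - (m/(m-1))((1 - 1/m)/l - m*/m) = m*/(m-1)`.
-/

open MeasureTheory Filter Topology Real Set

noncomputable def expGapKernel (l z x : ℝ) : ℝ :=
  if z < x then exp (-l * z) - exp (-l * x) else 0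

section ExpGapKernel

variable {l : ℝ}

lemma measurable_expGapKernel : Measurable (Function.uncurry (expGapKernel l)) :=
  Measurable.ite (measurableSet_lt measurable_fst measurable_snd)
    ((measurable_fst.const_mul (-l)).exp.sub (measurable_snd.const_mul (-l)).exp)
    measurable_const

lemma abs_expGapKernel_le (hl : 0 ≤ l) (z x : ℝ) : |expGapKernel l z x| ≤ exp (-l * z) := by
  unfold expGapKernel
  split_ifs with hzx
  · have : exp (-l * x) ≤ exp (-l * z) := exp_le_exp.2 (by nlinarith)
    rw [abs_of_nonneg (sub_nonneg.2 this)]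
    linarith [exp_pos (-l * x)]
  · simpa using (exp_pos _).le

lemma integrable_expGapKernel (hl : 0 < l) (μ : Measure ℝ) [IsFiniteMeasure μ] :
    Integrable (Function.uncurry (expGapKernel l)) ((volume.restrict (Ioi 0)).prod μ) :=
  Integrable.mono' ((exp_neg_integrableOn_Ioi 0 hl).mul_prod (integrable_const 1))
    measurable_expGapKernel.aestronglyMeasurable
    (Eventually.of_forall fun p => (abs_expGapKernel_le hl.le p.1 p.2).trans_eq (mul_one _).symm)

lemma integral_expGapKernel (μ : Measure ℝ) (z : ℝ) :
    ∫ x, expGapKernel l z x ∂μ =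
      (∫ x in Ioi z, (1 - exp (l * (z - x))) ∂μ) * exp (-l * z) := by
  have hsection : (fun x => expGapKernel l z x) =
      (Ioi z).indicator (fun x => exp (-l * z) - exp (-l * x)) := rfl
  rw [hsection, integral_indicator measurableSet_Ioi, ← integral_mul_const]
  congr 1 with x
  rw [sub_mul, one_mul, ← exp_add]
  ring_nf

lemma intervalIntegral_exp_neg_mul (hl : l ≠ 0) (a b : ℝ) :
    ∫ z in a..b, exp (-l * z) = (exp (-l * a) - exp (-l * b)) / l := by
  rw [intervalIntegral.integral_comp_mul_left (fun z => exp z) (neg_ne_zero.2 hl), integral_exp,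
    smul_eq_mul]
  field_simp
  ring

lemma setIntegral_Ioi_zero_expGapKernel (hl : l ≠ 0) {x : ℝ} (hx : 0 ≤ x) :
    ∫ z in Ioi 0, expGapKernel l z x = (1 - exp (-l * x)) / l - x * exp (-l * x) := by
  have hsection : (fun z => expGapKernel l z x) =
      (Iio x).indicator (fun z => exp (-l * z) - exp (-l * x)) := rfl
  rw [hsection, integral_indicator measurableSet_Iio, Measure.restrict_restrict measurableSet_Iio,
    Iio_inter_Ioi, ← integral_Ioc_eq_integral_Ioo, ← intervalIntegral.integral_of_le hx,
    intervalIntegral.integral_sub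
      ((by fun_prop : Continuous fun z => exp (-l * z)).intervalIntegrable _ _)
      intervalIntegrable_const,
    intervalIntegral_exp_neg_mul hl, intervalIntegral.integral_const]
  simp

end ExpGapKernel

section ExpMoments

variable {l : ℝ} {μ : Measure ℝ} [IsFiniteMeasure μ]

lemma integrable_exp_neg_mul (hl : 0 ≤ l) (hμ : ∀ᵐ x ∂μ, 0 ≤ x) :
    Integrable (fun x => exp (-l * x)) μ :=
  Integrable.mono' (integrable_const 1) (by fun_prop) <| hμ.mono fun x hx => by
    rw [norm_of_nonneg (exp_pos _).le, exp_le_one_iff]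
    nlinarith

lemma integrable_mul_exp_neg_mul (hl : 0 < l) (hμ : ∀ᵐ x ∂μ, 0 ≤ x) :
    Integrable (fun x => x * exp (-l * x)) μ :=
  Integrable.mono' (integrable_const (exp (-1) / l)) (by fun_prop) <| hμ.mono fun x hx => by
    rw [norm_of_nonneg (by positivity), le_div_iff₀ hl]
    have h := mul_exp_neg_le_exp_neg_one (l * x)
    rw [neg_mul]
    linarith

end ExpMoments

lemma integral_integral_expGapKernel {l : ℝ} {μ : Measure ℝ} [IsProbabilityMeasure μ]
    (hl : 0 < l) (hμ : ∀ᵐ x ∂μ, 0 ≤ x) :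
    ∫ z in Ioi 0, ∫ x, expGapKernel l z x ∂μ =
      (1 - ∫ x, exp (-l * x) ∂μ) / l - ∫ x, x * exp (-l * x) ∂μ := by
  have he := integrable_exp_neg_mul hl.le hμ
  rw [integral_integral_swap (integrable_expGapKernel hl μ),
    integral_congr_ae (hμ.mono fun x hx => setIntegral_Ioi_zero_expGapKernel hl.ne' hx),
    integral_sub (f := fun x => (1 - exp (-l * x)) / l)
      (((integrable_const 1).sub he).div_const l) (integrable_mul_exp_neg_mul hl hμ),
    integral_div, integral_sub (integrable_const 1) he]
  simp

/-- **The constant `B` in the Gumbel shift.** Let `l > 0`, `G` a Borel probability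
measure on `(0,∞)`, `m > 1` with `m·∫ e^{−lx} dG(x) = 1`.  Define
`F_R(s) := 1 − (m/(m−1))·∫_{(s,∞)} (1 − e^{l(s−x)}) dG(x)` for `s ≥ 0` and let
`m* := m·∫ x e^{−lx} dG(x)` (which is finite).  Then
`B := ∫₀^∞ F_R(z) e^{−lz} dz = m*/(m − 1)`. -/
theorem gumbel_shift_constant_B
    (l : ℝ) (hl : 0 < l)
    (G : Measure ℝ) [IsProbabilityMeasure G] (hGsupp : G (Set.Iic 0) = 0)
    (m : ℝ) (hm : 1 < m)
    (hmal : m * ∫ x, Real.exp (-l * x) ∂G = 1)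
    (F : ℝ → ℝ)
    (hF : ∀ s : ℝ, F s =
      1 - (m / (m - 1)) * ∫ x in Set.Ioi s, (1 - Real.exp (l * (s - x))) ∂G)
    (mstar : ℝ) (hmstar : mstar = m * ∫ x, x * Real.exp (-l * x) ∂G) :
    Integrable (fun x => x * Real.exp (-l * x)) G ∧
      (∫ z in Set.Ioi (0:ℝ), F z * Real.exp (-l * z)) = mstar / (m - 1) := by
  have hG : ∀ᵐ x ∂G, 0 ≤ x :=
    measure_mono_null (fun x (hx : ¬0 ≤ x) => (not_le.1 hx).le) hGsupp
  refine ⟨integrable_mul_exp_neg_mul hl hG, ?_⟩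
  have hFk : ∀ z, F z * exp (-l * z) =
      exp (-l * z) - m / (m - 1) * ∫ x, expGapKernel l z x ∂G := fun z => by
    rw [hF, sub_mul, one_mul, mul_assoc, integral_expGapKernel]
  have hk : Integrable (fun z => ∫ x, expGapKernel l z x ∂G) (volume.restrict (Ioi 0)) :=
    (integrable_expGapKernel hl G).integral_prod_left
  simp_rw [hFk]
  rw [integral_sub (exp_neg_integrableOn_Ioi 0 hl) (hk.const_mul _),
    integral_const_mul, integral_integral_expGapKernel hl hG, integral_exp_mul_Ioi (by linarith),
    hmstar, mul_zero, exp_zero]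
  generalize ∫ x, exp (-l * x) ∂G = I at hmal ⊢
  have hm1 : m - 1 ≠ 0 := by linarith
  field_simp
  linear_combination hmal
end
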